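/- arXiv:2002.09841 — 2 statements merged into one kernel-verified Lean document; each statement's English description precedes it below -/
import Mathlib

section
/- Under the permutation probability model, the top-1 probability of item d (the sum of p_s(π) over all permutations π with π_1 = d) equals φ(s_d) / ∑_{l=1}^m φ(s_l). -/
open Finset

private lemma succ_filter_sum {m : ℕ} (g : Fin (m+1) → ℝ) (i : Fin m) :
    ∑ l ∈ univ.filter (fun l : Fin (m+1) => i.succ ≤ l), g l
      = ∑ j ∈ univ.filter (fun j : Fin m => i ≤ j), g j.succ := by
  rw [Finset.sum_filter, Finset.sum_filter, Fin.sum_univ_succ]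
  simp [Fin.succ_le_succ_iff, Fin.succ_ne_zero]

private lemma tail_eq {m : ℕ} (s : Fin (m+1) → ℝ) (φ : ℝ → ℝ) (p : Fin (m+1))
    (τ : Equiv.Perm (Fin m)) :
    ∏ e : Fin (m+1),
        φ (s ((Equiv.Perm.decomposeFin.symm (p, τ)) e)) /
          (∑ l ∈ univ.filter (fun l : Fin (m+1) => e ≤ l),
            φ (s ((Equiv.Perm.decomposeFin.symm (p, τ)) l)))
      = (φ (s p) / ∑ l : Fin (m+1), φ (s l)) *
        ∏ i : Fin m,
          φ ((fun j : Fin m => s (Equiv.swap 0 p j.succ)) (τ i)) /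
            (∑ l ∈ univ.filter (fun l : Fin m => i ≤ l),
              φ ((fun j : Fin m => s (Equiv.swap 0 p j.succ)) (τ l))) := by
  set π := Equiv.Perm.decomposeFin.symm (p, τ) with hπ
  rw [Fin.prod_univ_succ]
  congr 1
  · have h0 : π 0 = p := Equiv.Perm.decomposeFin_symm_apply_zero p τ
    have hfilter : univ.filter (fun l : Fin (m+1) => (0 : Fin (m+1)) ≤ l) = univ := by
      simp [Fin.zero_le]
    rw [h0, hfilter, Equiv.sum_comp π (fun l => φ (s l))]
  · apply Finset.prod_congr rfl
    intro i _
    have hs : ∀ j : Fin m, π j.succ = Equiv.swap 0 p (τ j).succ := fun j =>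
      Equiv.Perm.decomposeFin_symm_apply_succ τ p j
    rw [succ_filter_sum (fun l => φ (s (π l))) i]
    simp only [hs]

private lemma perm_sum_one (φ : ℝ → ℝ) (hφ : ∀ x, 0 < φ x) :
    ∀ m : ℕ, ∀ s : Fin m → ℝ,
      ∑ π : Equiv.Perm (Fin m),
        ∏ e : Fin m,
          φ (s (π e)) / (∑ l ∈ univ.filter (fun l : Fin m => e ≤ l), φ (s (π l))) = 1 := by
  intro m
  induction m with
  | zero => intro s; simp
  | succ m ih =>
    intro s
    rw [← Equiv.sum_comp Equiv.Perm.decomposeFin.symm, Fintype.sum_prod_type]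
    have hpos : 0 < ∑ l : Fin (m+1), φ (s l) :=
      Finset.sum_pos (fun l _ => hφ _) ⟨0, mem_univ 0⟩
    calc ∑ p : Fin (m+1), ∑ τ : Equiv.Perm (Fin m),
          ∏ e : Fin (m+1),
            φ (s ((Equiv.Perm.decomposeFin.symm (p, τ)) e)) /
              (∑ l ∈ univ.filter (fun l : Fin (m+1) => e ≤ l),
                φ (s ((Equiv.Perm.decomposeFin.symm (p, τ)) l)))
        = ∑ p : Fin (m+1), (φ (s p) / ∑ l : Fin (m+1), φ (s l)) := by
          apply Finset.sum_congr rfl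
          intro p _
          rw [show (∑ τ : Equiv.Perm (Fin m), ∏ e : Fin (m+1),
            φ (s ((Equiv.Perm.decomposeFin.symm (p, τ)) e)) /
              (∑ l ∈ univ.filter (fun l : Fin (m+1) => e ≤ l),
                φ (s ((Equiv.Perm.decomposeFin.symm (p, τ)) l)))) =
            ∑ τ : Equiv.Perm (Fin m), (φ (s p) / ∑ l : Fin (m+1), φ (s l)) *
              ∏ i : Fin m,
                φ ((fun j : Fin m => s (Equiv.swap 0 p j.succ)) (τ i)) /
                  (∑ l ∈ univ.filter (fun l : Fin m => i ≤ l),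
                    φ ((fun j : Fin m => s (Equiv.swap 0 p j.succ)) (τ l)))
            from Finset.sum_congr rfl (fun τ _ => tail_eq s φ p τ)]
          rw [← Finset.mul_sum, ih (fun j : Fin m => s (Equiv.swap 0 p j.succ)), mul_one]
      _ = 1 := by
          rw [← Finset.sum_div, div_self hpos.ne']

/-- The top-1 probability of item `d` under the permutation probability model equals
`φ (s d) / ∑ l, φ (s l)`. -/
theorem top_one_probability (m : ℕ) (hm : 0 < m) (s : Fin m → ℝ) (φ : ℝ → ℝ)
    (hφ : ∀ x, 0 < φ x) (d : Fin m) :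
    ∑ π ∈ Finset.univ.filter (fun π : Equiv.Perm (Fin m) => π ⟨0, hm⟩ = d),
      ∏ e : Fin m,
        φ (s (π e)) / (∑ l ∈ Finset.univ.filter (fun l : Fin m => e ≤ l), φ (s (π l)))
      = φ (s d) / ∑ l : Fin m, φ (s l) := by
  obtain ⟨m, rfl⟩ : ∃ n, m = n + 1 := ⟨m - 1, (Nat.succ_pred_eq_of_pos hm).symm⟩
  have hzero : (⟨0, hm⟩ : Fin (m+1)) = 0 := rfl
  rw [Finset.sum_filter]
  rw [← Equiv.sum_comp Equiv.Perm.decomposeFin.symm, Fintype.sum_prod_type]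
  have key : ∀ p : Fin (m+1),
      (∑ τ : Equiv.Perm (Fin m),
        if (Equiv.Perm.decomposeFin.symm (p, τ)) ⟨0, hm⟩ = d then
          ∏ e : Fin (m+1),
            φ (s ((Equiv.Perm.decomposeFin.symm (p, τ)) e)) /
              (∑ l ∈ univ.filter (fun l : Fin (m+1) => e ≤ l),
                φ (s ((Equiv.Perm.decomposeFin.symm (p, τ)) l)))
        else 0)
      = if p = d then φ (s p) / ∑ l : Fin (m+1), φ (s l) else 0 := by
    intro p
    have h0 : ∀ τ : Equiv.Perm (Fin m),
        (Equiv.Perm.decomposeFin.symm (p, τ)) ⟨0, hm⟩ = p := fun τ => by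
      rw [hzero]; exact Equiv.Perm.decomposeFin_symm_apply_zero p τ
    by_cases hp : p = d
    · subst hp
      simp only [h0, eq_self_iff_true, if_true]
      rw [show (∑ τ : Equiv.Perm (Fin m), ∏ e : Fin (m+1),
            φ (s ((Equiv.Perm.decomposeFin.symm (p, τ)) e)) /
              (∑ l ∈ univ.filter (fun l : Fin (m+1) => e ≤ l),
                φ (s ((Equiv.Perm.decomposeFin.symm (p, τ)) l)))) =
          ∑ τ : Equiv.Perm (Fin m), (φ (s p) / ∑ l : Fin (m+1), φ (s l)) *
            ∏ i : Fin m,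
              φ ((fun j : Fin m => s (Equiv.swap 0 p j.succ)) (τ i)) /
                (∑ l ∈ univ.filter (fun l : Fin m => i ≤ l),
                  φ ((fun j : Fin m => s (Equiv.swap 0 p j.succ)) (τ l)))
          from Finset.sum_congr rfl (fun τ _ => tail_eq s φ p τ)]
      rw [← Finset.mul_sum, perm_sum_one φ hφ m (fun j : Fin m => s (Equiv.swap 0 p j.succ)),
        mul_one]
    · simp only [h0, hp, if_neg hp, Finset.sum_const_zero, if_false]
  rw [Finset.sum_congr rfl (fun p _ => key p), Finset.sum_ite_eq' univ d
    (fun p => φ (s p) / ∑ l : Fin (m+1), φ (s l)), if_pos (mem_univ d)]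
end

section
/- Let λ_l, λ'_l > 0 for l in a finite index set, with ‖log λ − log λ'‖_∞ ≤ δ. Fix indices j', k' and let Λ = λ_{j'} + ∑_{k ∈ O} λ_k and Λ' = λ'_{j'} + ∑_{k ∈ O} λ'_k for a finite set O of other indices with |O| = K − 1, and suppose λ_l ∈ [e^{−α}, e^{α}] for all l. Then for any index i, |log(1 + λ_i/Λ) − log(1 + λ'_i/Λ')| ≤ (1 − e^{−2δ}) · e^{2α}/K. -/
open Finset

private lemma log_ratio_term_bound_aux {ι : Type*} (δ α : ℝ) (hδ : 0 ≤ δ)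
    (lam lam' : ι → ℝ) (hlam : ∀ l, 0 < lam l) (hlam' : ∀ l, 0 < lam' l)
    (hboundU : ∀ l, lam l ≤ Real.exp α)
    (hboundL : ∀ l, Real.exp (-α) ≤ lam l)
    (hr1 : ∀ l, lam l ≤ Real.exp δ * lam' l)
    (hr2 : ∀ l, lam' l ≤ Real.exp δ * lam l)
    (O : Finset ι) (j' : ι) (K : ℕ) (hK : O.card = K - 1) (hK1 : 1 ≤ K)
    (i : ι) :
    Real.log (1 + lam i / (lam j' + ∑ k ∈ O, lam k))
        - Real.log (1 + lam' i / (lam' j' + ∑ k ∈ O, lam' k))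
      ≤ (1 - Real.exp (-2 * δ)) * Real.exp (2 * α) / K := by
  set Λ := lam j' + ∑ k ∈ O, lam k with hΛdef
  set Λ' := lam' j' + ∑ k ∈ O, lam' k with hΛ'def
  have hΛ : 0 < Λ :=
    add_pos_of_pos_of_nonneg (hlam j') (Finset.sum_nonneg fun k _ => (hlam k).le)
  have hΛ' : 0 < Λ' :=
    add_pos_of_pos_of_nonneg (hlam' j') (Finset.sum_nonneg fun k _ => (hlam' k).le)
  have hKpos : (0:ℝ) < K := by exact_mod_cast hK1
  have hcard : (O.card : ℝ) = (K : ℝ) - 1 := by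
    rw [hK, Nat.cast_sub hK1, Nat.cast_one]
  -- Λ ≥ K e^{-α}
  have hsum : (O.card : ℝ) * Real.exp (-α) ≤ ∑ k ∈ O, lam k := by
    have := Finset.card_nsmul_le_sum O lam (Real.exp (-α)) (fun k _ => hboundL k)
    simpa [nsmul_eq_mul] using this
  have hΛK : (K : ℝ) * Real.exp (-α) ≤ Λ := by
    have h := add_le_add (hboundL j') hsum
    rw [hcard] at h
    calc (K:ℝ) * Real.exp (-α) = Real.exp (-α) + ((K:ℝ) - 1) * Real.exp (-α) := by ring
      _ ≤ Λ := h
  -- Λ' ≤ e^δ Λ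
  have hΛ'le : Λ' ≤ Real.exp δ * Λ := by
    have h : Λ' ≤ Real.exp δ * lam j' + ∑ k ∈ O, Real.exp δ * lam k :=
      add_le_add (hr2 j') (Finset.sum_le_sum fun k _ => hr2 k)
    calc Λ' ≤ Real.exp δ * lam j' + ∑ k ∈ O, Real.exp δ * lam k := h
      _ = Real.exp δ * Λ := by rw [hΛdef, mul_add, Finset.mul_sum]
  set x := lam i / Λ with hxdef
  set x' := lam' i / Λ' with hx'def
  have hxpos : 0 < x := div_pos (hlam i) hΛ
  have hx'pos : 0 < x' := div_pos (hlam' i) hΛ'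
  -- x' ≥ e^{-2δ} x
  have hnum : Real.exp (-δ) * lam i ≤ lam' i := by
    have h := mul_le_mul_of_nonneg_left (hr1 i) (Real.exp_pos (-δ)).le
    have he : Real.exp (-δ) * Real.exp δ = 1 := by
      rw [← Real.exp_add]; simp
    calc Real.exp (-δ) * lam i ≤ Real.exp (-δ) * (Real.exp δ * lam' i) := h
      _ = lam' i := by rw [← mul_assoc, he, one_mul]
  have hx' : Real.exp (-(2 * δ)) * x ≤ x' := by
    have h : (Real.exp (-δ) * lam i) / (Real.exp δ * Λ) ≤ lam' i / Λ' :=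
      div_le_div₀ (hlam' i).le hnum hΛ' hΛ'le
    have heq : (Real.exp (-δ) * lam i) / (Real.exp δ * Λ)
        = Real.exp (-(2 * δ)) * x := by
      rw [mul_div_mul_comm, hxdef, ← Real.exp_sub]
      ring_nf
    rw [heq] at h
    exact h
  -- x ≤ e^{2α}/K
  have hxK : x ≤ Real.exp (2 * α) / K := by
    rw [hxdef, div_le_div_iff₀ hΛ hKpos]
    have he1 : Real.exp (2 * α) = Real.exp α * Real.exp α := by
      rw [← Real.exp_add]; ring_nf
    have he2 : Real.exp α * Real.exp (-α) = 1 := by rw [← Real.exp_add]; simp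
    have hkey : Real.exp (2 * α) * ((K:ℝ) * Real.exp (-α)) = Real.exp α * (K:ℝ) := by
      rw [he1]
      calc Real.exp α * Real.exp α * ((K:ℝ) * Real.exp (-α))
          = (Real.exp α * Real.exp (-α)) * (Real.exp α * (K:ℝ)) := by ring
        _ = Real.exp α * (K:ℝ) := by rw [he2, one_mul]
    linarith [mul_le_mul_of_nonneg_right (hboundU i) hKpos.le,
      mul_le_mul_of_nonneg_left hΛK (Real.exp_pos (2 * α)).le, hkey]
  have h1x : (0:ℝ) < 1 + x := by linarith
  have h1x' : (0:ℝ) < 1 + x' := by linarith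
  have hme : 0 ≤ 1 - Real.exp (-(2*δ)) := by
    have : Real.exp (-(2*δ)) ≤ 1 := Real.exp_le_one_iff.mpr (by linarith)
    linarith
  have hgoal : (1 - Real.exp (-2 * δ)) * Real.exp (2 * α) / K
      = (1 - Real.exp (-(2*δ))) * (Real.exp (2 * α) / K) := by
    rw [mul_div_assoc]; ring_nf
  rcases le_or_gt x' x with h | h
  · have hlog := Real.log_le_sub_one_of_pos (show 0 < (1+x)/(1+x') by positivity)
    rw [Real.log_div (ne_of_gt h1x) (ne_of_gt h1x')] at hlog
    have h2 : (1+x)/(1+x') - 1 ≤ x - x' := by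
      rw [div_sub_one (ne_of_gt h1x')]
      have : (1 + x - (1 + x')) / (1 + x') ≤ (1 + x - (1 + x')) :=
        div_le_self (by linarith) (by linarith)
      linarith
    have h3 : x - x' ≤ (1 - Real.exp (-(2*δ))) * x := by nlinarith
    have h4 : (1 - Real.exp (-(2*δ))) * x ≤ (1 - Real.exp (-(2*δ))) * (Real.exp (2*α) / K) :=
      mul_le_mul_of_nonneg_left hxK hme
    rw [hgoal]
    linarith
  · have hlog : Real.log (1 + x) ≤ Real.log (1 + x') :=
      Real.log_le_log (by linarith) (by linarith)
    have hrhs : 0 ≤ (1 - Real.exp (-(2*δ))) * (Real.exp (2 * α) / K) :=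
      mul_nonneg hme (div_nonneg (Real.exp_pos _).le hKpos.le)
    rw [hgoal]
    linarith

/-- Variation bound for terms of the setwise loss: with rates in `[e^{-α}, e^{α}]` whose
log-ratios are uniformly within `δ`, and `Λ = λ_{j'} + ∑_{k ∈ O} λ_k` (a sum of `K` terms),
we have `|log (1 + λ_i / Λ) − log (1 + λ'_i / Λ')| ≤ (1 − e^{−2δ}) e^{2α} / K`. -/
theorem log_ratio_term_bound {ι : Type*} (δ α : ℝ) (hδ : 0 ≤ δ) (hα : 0 < α)
    (lam lam' : ι → ℝ) (hlam : ∀ l, 0 < lam l) (hlam' : ∀ l, 0 < lam' l)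
    (hbound : ∀ l, Real.exp (-α) ≤ lam l ∧ lam l ≤ Real.exp α)
    (hbound' : ∀ l, Real.exp (-α) ≤ lam' l ∧ lam' l ≤ Real.exp α)
    (hδbound : ∀ l, |Real.log (lam l / lam' l)| ≤ δ)
    (O : Finset ι) (j' : ι) (hj' : j' ∉ O) (K : ℕ) (hK : O.card = K - 1) (hK1 : 1 ≤ K)
    (i : ι) :
    |Real.log (1 + lam i / (lam j' + ∑ k ∈ O, lam k))
        - Real.log (1 + lam' i / (lam' j' + ∑ k ∈ O, lam' k))|
      ≤ (1 - Real.exp (-2 * δ)) * Real.exp (2 * α) / K := by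
  have hr1 : ∀ l, lam l ≤ Real.exp δ * lam' l := by
    intro l
    have h := (abs_le.mp (hδbound l)).2
    have hpos : 0 < lam l / lam' l := div_pos (hlam l) (hlam' l)
    have := (Real.log_le_iff_le_exp hpos).mp h
    rw [div_le_iff₀ (hlam' l)] at this
    linarith [this]
  have hr2 : ∀ l, lam' l ≤ Real.exp δ * lam l := by
    intro l
    have h := (abs_le.mp (hδbound l)).1
    have hpos : 0 < lam' l / lam l := div_pos (hlam' l) (hlam l)
    have hlog : Real.log (lam' l / lam l) ≤ δ := by
      rw [Real.log_div (ne_of_gt (hlam' l)) (ne_of_gt (hlam l))]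
      rw [Real.log_div (ne_of_gt (hlam l)) (ne_of_gt (hlam' l))] at h
      linarith
    have := (Real.log_le_iff_le_exp hpos).mp hlog
    rw [div_le_iff₀ (hlam l)] at this
    linarith [this]
  rw [abs_sub_le_iff]
  constructor
  · exact log_ratio_term_bound_aux δ α hδ lam lam' hlam hlam'
      (fun l => (hbound l).2) (fun l => (hbound l).1) hr1 hr2 O j' K hK hK1 i
  · exact log_ratio_term_bound_aux δ α hδ lam' lam hlam' hlam
      (fun l => (hbound' l).2) (fun l => (hbound' l).1) hr2 hr1 O j' K hK hK1 i
end
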